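/- arXiv:2211.07644 — 4 statements merged into one kernel-verified Lean document; each statement's English description precedes it below -/
import Mathlib

section
/- For all strings x, y ∈ Σ_k^n of the same length n, the edit distance satisfies d_E(x,y) = min over s ∈ {0,…,n} and over all pairs of strictly increasing (strictly monotone) maps I, J : Fin s → Fin n of the quantity 2·(n−s) + #{ℓ ∈ Fin s : x(I ℓ) ≠ y(J ℓ)}. (In particular the minimum is attained, since s = 0 with the empty maps gives the value 2n ≥ d_E(x,y).) -/
/-- Costs of the edit operations (restored from the older Mathlib, where it was removed). -/
structure Levenshtein.Cost (α β δ : Type*) where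
  /-- Cost to delete an element from a list. -/
  delete : α → δ
  /-- Cost in insert an element into a list. -/
  insert : β → δ
  /-- Cost to substitute one element for another in a list. -/
  substitute : α → β → δ

/-- The default cost structure (restored from the older Mathlib). -/
@[simps]
def Levenshtein.defaultCost {α : Type*} [DecidableEq α] : Levenshtein.Cost α α ℕ where
  delete _ := 1
  insert _ := 1
  substitute a b := if a = b then 0 else 1

/-- Helper for `suffixLevenshtein` (restored from the older Mathlib). -/
def Levenshtein.impl {α β δ : Type*} [Zero δ] [Min δ] [Add δ]
    (C : Levenshtein.Cost α β δ)
    (xs : List α) (y : β) (d : {r : List δ // 0 < r.length}) : {r : List δ // 0 < r.length} :=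
  let ⟨ds, w⟩ := d
  xs.zip (ds.zip ds.tail) |>.foldr
    (init := ⟨[C.insert y + ds.getLast (List.length_pos_iff.mp w)], by simp⟩)
    (fun ⟨x, d₀, d₁⟩ ⟨r, w⟩ =>
      ⟨min (C.delete x + r[0]) (min (C.insert y + d₀) (C.substitute x y + d₁)) :: r, by simp⟩)

/-- `suffixLevenshtein C xs ys` computes the Levenshtein distance between each suffix of `xs`
and `ys` (restored from the older Mathlib). -/
def suffixLevenshtein {α β δ : Type*} [Zero δ] [Min δ] [Add δ]
    (C : Levenshtein.Cost α β δ) (xs : List α) (ys : List β) :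
    {r : List δ // 0 < r.length} :=
  ys.foldr
    (Levenshtein.impl C xs)
    (xs.foldr (init := ⟨[0], by simp⟩) (fun a ⟨r, w⟩ => ⟨(C.delete a + r[0]) :: r, by simp⟩))

/-- The Levenshtein distance (restored from the older Mathlib). -/
def levenshtein {α β δ : Type*} [Zero δ] [Min δ] [Add δ]
    (C : Levenshtein.Cost α β δ) (xs : List α) (ys : List β) : δ :=
  let ⟨r, w⟩ := suffixLevenshtein C xs ys
  r[0]

/-- Edit distance between two strings over `Fin k`, with unit costs for
substitution, deletion and insertion, and cost `0` for a match. -/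
def editDist {k : ℕ} (x y : List (Fin k)) : ℕ :=
  levenshtein Levenshtein.defaultCost x y

/-!
Both sides obey the same recursion on the first symbols. For `levenshtein` this is the
dynamic-programming recursion: delete `a`, insert `b`, or substitute `a` by `b`. An alignment of
`a :: x` with `b :: y` either leaves position `0` of one string unaligned, or, by strict
monotonicity, aligns position `0` with position `0`; its cost then drops by `1`, `1`, or
`[a ≠ b]` respectively. Induction on the lengths shows that every alignment costs at least the edit
distance and that the recursion for the edit distance is realised by some alignment.
-/

section Recursion

variable {α β δ : Type*} [Zero δ] [Min δ] [Add δ] (C : Levenshtein.Cost α β δ)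

theorem Levenshtein.impl_cons (x : α) (xs : List α) (y : β) (e : δ)
    (d dt : {r : List δ // 0 < r.length}) (h : d.1 = e :: dt.1) :
    (Levenshtein.impl C (x :: xs) y d).1 =
      min (C.delete x + (Levenshtein.impl C xs y dt).1[0]'(Levenshtein.impl C xs y dt).2)
        (min (C.insert y + e) (C.substitute x y + dt.1[0]'dt.2)) ::
      (Levenshtein.impl C xs y dt).1 := by
  obtain ⟨_ | ⟨_, _⟩, hdt⟩ := dt
  · simp at hdt
  obtain ⟨_, _⟩ := d
  obtain rfl := h
  rfl

theorem levenshtein_eq_getElem_zero (xs : List α) (ys : List β) :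
    levenshtein C xs ys = (suffixLevenshtein C xs ys).1[0]'(suffixLevenshtein C xs ys).2 := rfl

theorem suffixLevenshtein_cons_right (xs : List α) (y : β) (ys : List β) :
    suffixLevenshtein C xs (y :: ys) = Levenshtein.impl C xs y (suffixLevenshtein C xs ys) := rfl

theorem suffixLevenshtein_nil_left (ys : List β) :
    (suffixLevenshtein C [] ys).1 = [levenshtein C [] ys] := by
  cases ys <;> rfl

theorem suffixLevenshtein_cons_left (x : α) (xs : List α) (ys : List β) :
    (suffixLevenshtein C (x :: xs) ys).1 =
      levenshtein C (x :: xs) ys :: (suffixLevenshtein C xs ys).1 := by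
  induction ys with
  | nil => rfl
  | cons y ys ih =>
    have h := Levenshtein.impl_cons C x xs y _ _ _ ih
    rw [← suffixLevenshtein_cons_right, ← suffixLevenshtein_cons_right] at h
    rw [levenshtein_eq_getElem_zero, List.getElem_of_eq h]
    exact h

theorem levenshtein_nil_cons (y : β) (ys : List β) :
    levenshtein C [] (y :: ys) = C.insert y + levenshtein C [] ys := by
  show C.insert y + (suffixLevenshtein C [] ys).1.getLast _ = _
  simp only [suffixLevenshtein_nil_left, List.getLast_singleton]

theorem levenshtein_cons_nil (x : α) (xs : List α) :
    levenshtein C (x :: xs) [] = C.delete x + levenshtein C xs [] := rfl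

theorem levenshtein_cons_cons (x : α) (xs : List α) (y : β) (ys : List β) :
    levenshtein C (x :: xs) (y :: ys) =
      min (C.delete x + levenshtein C xs (y :: ys))
        (min (C.insert y + levenshtein C (x :: xs) ys)
          (C.substitute x y + levenshtein C xs ys)) := by
  have h := Levenshtein.impl_cons C x xs y _ _ _ (suffixLevenshtein_cons_left C x xs ys)
  rw [← suffixLevenshtein_cons_right, ← suffixLevenshtein_cons_right] at h
  rw [levenshtein_eq_getElem_zero, List.getElem_of_eq h]
  rfl

end Recursion

section DefaultCost

variable {α : Type*} [DecidableEq α]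

theorem levenshtein_defaultCost_nil_left (ys : List α) :
    levenshtein Levenshtein.defaultCost [] ys = ys.length := by
  induction ys with
  | nil => rfl
  | cons y ys ih =>
    rw [levenshtein_nil_cons, ih, Levenshtein.defaultCost_insert, List.length_cons, add_comm]

theorem levenshtein_defaultCost_nil_right (xs : List α) :
    levenshtein Levenshtein.defaultCost xs [] = xs.length := by
  induction xs with
  | nil => rfl
  | cons x xs ih =>
    rw [levenshtein_cons_nil, ih, Levenshtein.defaultCost_delete, List.length_cons, add_comm]

theorem levenshtein_defaultCost_cons_cons (x : α) (xs : List α) (y : α) (ys : List α) :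
    levenshtein Levenshtein.defaultCost (x :: xs) (y :: ys) =
      min (levenshtein Levenshtein.defaultCost xs (y :: ys) + 1)
        (min (levenshtein Levenshtein.defaultCost (x :: xs) ys + 1)
          (levenshtein Levenshtein.defaultCost xs ys + if x = y then 0 else 1)) := by
  simp only [levenshtein_cons_cons, Levenshtein.defaultCost_delete, Levenshtein.defaultCost_insert,
    Levenshtein.defaultCost_substitute, add_comm]

theorem levenshtein_defaultCost_ofFn_succ {m n : ℕ} (x : Fin (m + 1) → α)
    (y : Fin (n + 1) → α) :
    levenshtein Levenshtein.defaultCost (List.ofFn x) (List.ofFn y) =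
      min (levenshtein Levenshtein.defaultCost (List.ofFn (Fin.tail x)) (List.ofFn y) + 1)
        (min (levenshtein Levenshtein.defaultCost (List.ofFn x) (List.ofFn (Fin.tail y)) + 1)
          (levenshtein Levenshtein.defaultCost (List.ofFn (Fin.tail x)) (List.ofFn (Fin.tail y)) +
            if x 0 = y 0 then 0 else 1)) := by
  conv_lhs => rw [List.ofFn_succ (f := x), List.ofFn_succ (f := y)]
  rw [levenshtein_defaultCost_cons_cons, ← List.ofFn_succ (f := x), ← List.ofFn_succ (f := y)]
  rfl

end DefaultCost

namespace Fin

variable {m s : ℕ}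

theorem exists_strictMono_eq_succ_comp {I : Fin s → Fin (m + 1)} (hI : StrictMono I)
    (h : ∀ ℓ, I ℓ ≠ 0) : ∃ I' : Fin s → Fin m, StrictMono I' ∧ I = succ ∘ I' :=
  ⟨fun ℓ ↦ (I ℓ).pred (h ℓ), fun _ _ hlt ↦ pred_lt_pred_iff.2 (hI hlt),
    funext fun _ ↦ (succ_pred _ _).symm⟩

theorem exists_strictMono_eq_cons_zero {I : Fin (s + 1) → Fin (m + 1)} (hI : StrictMono I)
    (h : I 0 = 0) : ∃ I' : Fin s → Fin m, StrictMono I' ∧ I = cons 0 (succ ∘ I') := by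
  rw [← cons_self_tail I, h, strictMono_cons] at hI
  obtain ⟨I', hI', hI'_eq⟩ := exists_strictMono_eq_succ_comp hI.2 fun ℓ ↦ (hI.1 ℓ).ne'
  exact ⟨I', hI', by rw [← hI'_eq, ← h, cons_self_tail]⟩

end Fin

section Alignment

variable {α : Type*} [DecidableEq α] {m n s : ℕ}

/-- Unaligned symbols are deleted or inserted, aligned mismatches substituted. -/
def alignCost (x : Fin m → α) (y : Fin n → α) (I : Fin s → Fin m) (J : Fin s → Fin n) : ℕ :=
  (m - s) + (n - s) + (Finset.univ.filter fun ℓ ↦ x (I ℓ) ≠ y (J ℓ)).card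

theorem alignCost_of_length_zero (x : Fin m → α) (y : Fin n → α) (I : Fin 0 → Fin m)
    (J : Fin 0 → Fin n) : alignCost x y I J = m + n := by
  simp [alignCost]

theorem alignCost_succ_comp_left (x : Fin (m + 1) → α) (y : Fin n → α) {I : Fin s → Fin m}
    (hs : s ≤ m) (J : Fin s → Fin n) :
    alignCost x y (Fin.succ ∘ I) J = alignCost (Fin.tail x) y I J + 1 := by
  change _ + _ + (Finset.univ.filter fun ℓ ↦ Fin.tail x (I ℓ) ≠ y (J ℓ)).card = _
  rw [alignCost]
  omega

theorem alignCost_succ_comp_right (x : Fin m → α) (y : Fin (n + 1) → α) (I : Fin s → Fin m)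
    {J : Fin s → Fin n} (hs : s ≤ n) :
    alignCost x y I (Fin.succ ∘ J) = alignCost x (Fin.tail y) I J + 1 := by
  change _ + _ + (Finset.univ.filter fun ℓ ↦ x (I ℓ) ≠ Fin.tail y (J ℓ)).card = _
  rw [alignCost]
  omega

theorem alignCost_cons_zero (x : Fin (m + 1) → α) (y : Fin (n + 1) → α) (I : Fin s → Fin m)
    (J : Fin s → Fin n) :
    alignCost x y (Fin.cons 0 (Fin.succ ∘ I)) (Fin.cons 0 (Fin.succ ∘ J)) =
      alignCost (Fin.tail x) (Fin.tail y) I J + if x 0 = y 0 then 0 else 1 := by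
  have hcard : (Finset.univ.filter fun ℓ : Fin (s + 1) ↦
        x ((Fin.cons 0 (Fin.succ ∘ I) : Fin (s + 1) → Fin (m + 1)) ℓ) ≠
          y ((Fin.cons 0 (Fin.succ ∘ J) : Fin (s + 1) → Fin (n + 1)) ℓ)).card =
      (if x 0 = y 0 then 0 else 1) +
        (Finset.univ.filter fun ℓ ↦ Fin.tail x (I ℓ) ≠ Fin.tail y (J ℓ)).card := by
    rw [Fin.card_filter_univ_succ', Fin.cons_zero, Fin.cons_zero, ite_not]
    rfl
  rw [alignCost, alignCost, hcard]
  omega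

theorem alignCost_cases (x : Fin (m + 1) → α) (y : Fin (n + 1) → α) {I : Fin s → Fin (m + 1)}
    {J : Fin s → Fin (n + 1)} (hI : StrictMono I) (hJ : StrictMono J) :
    (∃ I' : Fin s → Fin m, StrictMono I' ∧
        alignCost x y I J = alignCost (Fin.tail x) y I' J + 1) ∨
      (∃ J' : Fin s → Fin n, StrictMono J' ∧
        alignCost x y I J = alignCost x (Fin.tail y) I J' + 1) ∨
      ∃ (s' : ℕ) (I' : Fin s' → Fin m) (J' : Fin s' → Fin n), StrictMono I' ∧ StrictMono J' ∧
        alignCost x y I J =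
          alignCost (Fin.tail x) (Fin.tail y) I' J' + if x 0 = y 0 then 0 else 1 := by
  by_cases hI0 : ∀ ℓ, I ℓ ≠ 0
  · obtain ⟨I', hI', rfl⟩ := Fin.exists_strictMono_eq_succ_comp hI hI0
    exact Or.inl ⟨I', hI', alignCost_succ_comp_left x y (Fin.le_of_injective _ hI'.injective) J⟩
  by_cases hJ0 : ∀ ℓ, J ℓ ≠ 0
  · obtain ⟨J', hJ', rfl⟩ := Fin.exists_strictMono_eq_succ_comp hJ hJ0
    exact Or.inr <| Or.inl
      ⟨J', hJ', alignCost_succ_comp_right x y I (Fin.le_of_injective _ hJ'.injective)⟩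
  push Not at hI0 hJ0
  obtain ⟨i, hi⟩ := hI0
  obtain ⟨j, hj⟩ := hJ0
  cases s with
  | zero => exact i.elim0
  | succ s =>
    obtain ⟨I', hI', rfl⟩ := Fin.exists_strictMono_eq_cons_zero hI
      (nonpos_iff_eq_zero.1 (hi ▸ hI.monotone (Fin.zero_le i)))
    obtain ⟨J', hJ', rfl⟩ := Fin.exists_strictMono_eq_cons_zero hJ
      (nonpos_iff_eq_zero.1 (hj ▸ hJ.monotone (Fin.zero_le j)))
    exact Or.inr (Or.inr ⟨s, I', J', hI', hJ', alignCost_cons_zero x y I' J'⟩)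

theorem levenshtein_le_alignCost (x : Fin m → α) (y : Fin n → α) {I : Fin s → Fin m}
    {J : Fin s → Fin n} (hI : StrictMono I) (hJ : StrictMono J) :
    levenshtein Levenshtein.defaultCost (List.ofFn x) (List.ofFn y) ≤ alignCost x y I J := by
  induction m generalizing n s with
  | zero =>
    obtain rfl : s = 0 := Nat.le_zero.1 (Fin.le_of_injective I hI.injective)
    rw [alignCost_of_length_zero, List.ofFn_zero, levenshtein_defaultCost_nil_left,
      List.length_ofFn, zero_add]
  | succ m ihm =>
    induction n generalizing s with
    | zero =>
      obtain rfl : s = 0 := Nat.le_zero.1 (Fin.le_of_injective J hJ.injective)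
      rw [alignCost_of_length_zero, List.ofFn_zero, levenshtein_defaultCost_nil_right,
        List.length_ofFn, add_zero]
    | succ n ihn =>
      rw [levenshtein_defaultCost_ofFn_succ]
      rcases alignCost_cases x y hI hJ with
        ⟨I', hI', hc⟩ | ⟨J', hJ', hc⟩ | ⟨s', I', J', hI', hJ', hc⟩ <;> rw [hc]
      · exact (min_le_left _ _).trans (Nat.add_le_add_right (ihm _ _ hI' hJ) 1)
      · exact (min_le_right _ _).trans <| (min_le_left _ _).trans <|
          Nat.add_le_add_right (ihn _ hI hJ') 1
      · exact (min_le_right _ _).trans <| (min_le_right _ _).trans <|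
          Nat.add_le_add_right (ihm _ _ hI' hJ') _

theorem exists_alignCost_eq_levenshtein (x : Fin m → α) (y : Fin n → α) :
    ∃ (s : ℕ) (I : Fin s → Fin m) (J : Fin s → Fin n), StrictMono I ∧ StrictMono J ∧
      alignCost x y I J = levenshtein Levenshtein.defaultCost (List.ofFn x) (List.ofFn y) := by
  induction m generalizing n with
  | zero =>
    refine ⟨0, Fin.elim0, Fin.elim0, fun i ↦ i.elim0, fun i ↦ i.elim0, ?_⟩
    rw [alignCost_of_length_zero, List.ofFn_zero, levenshtein_defaultCost_nil_left,
      List.length_ofFn, zero_add]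
  | succ m ihm =>
    induction n with
    | zero =>
      refine ⟨0, Fin.elim0, Fin.elim0, fun i ↦ i.elim0, fun i ↦ i.elim0, ?_⟩
      rw [alignCost_of_length_zero, List.ofFn_zero, levenshtein_defaultCost_nil_right,
        List.length_ofFn, add_zero]
    | succ n ihn =>
      obtain ⟨s₁, I₁, J₁, hI₁, hJ₁, h₁⟩ := ihm (Fin.tail x) y
      obtain ⟨s₂, I₂, J₂, hI₂, hJ₂, h₂⟩ := ihn (Fin.tail y)
      obtain ⟨s₃, I₃, J₃, hI₃, hJ₃, h₃⟩ := ihm (Fin.tail x) (Fin.tail y)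
      rw [levenshtein_defaultCost_ofFn_succ, ← h₁, ← h₂, ← h₃]
      rcases min_choice (alignCost (Fin.tail x) y I₁ J₁ + 1)
        (min (alignCost x (Fin.tail y) I₂ J₂ + 1)
          (alignCost (Fin.tail x) (Fin.tail y) I₃ J₃ + if x 0 = y 0 then 0 else 1)) with h | h
        <;> rw [h]
      · exact ⟨s₁, Fin.succ ∘ I₁, J₁, Fin.strictMono_succ.comp hI₁, hJ₁,
          alignCost_succ_comp_left x y (Fin.le_of_injective _ hI₁.injective) J₁⟩
      rcases min_choice (alignCost x (Fin.tail y) I₂ J₂ + 1)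
        (alignCost (Fin.tail x) (Fin.tail y) I₃ J₃ + if x 0 = y 0 then 0 else 1) with h | h
        <;> rw [h]
      · exact ⟨s₂, I₂, Fin.succ ∘ J₂, hI₂, Fin.strictMono_succ.comp hJ₂,
          alignCost_succ_comp_right x y I₂ (Fin.le_of_injective _ hJ₂.injective)⟩
      · exact ⟨s₃ + 1, Fin.cons 0 (Fin.succ ∘ I₃), Fin.cons 0 (Fin.succ ∘ J₃),
          Fin.strictMono_cons.2 ⟨fun _ ↦ Fin.succ_pos _, Fin.strictMono_succ.comp hI₃⟩,
          Fin.strictMono_cons.2 ⟨fun _ ↦ Fin.succ_pos _, Fin.strictMono_succ.comp hJ₃⟩,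
          alignCost_cons_zero x y I₃ J₃⟩

end Alignment

theorem editDist_eq_min_over_alignments_general (k n : ℕ)
    (x y : Fin n → Fin k) :
    editDist (List.ofFn x) (List.ofFn y) =
      sInf { v : ℕ | ∃ s : ℕ, s ≤ n ∧ ∃ I J : Fin s → Fin n,
        StrictMono I ∧ StrictMono J ∧
        v = 2 * (n - s) +
          (Finset.univ.filter (fun ℓ : Fin s => x (I ℓ) ≠ y (J ℓ))).card } := by
  refine (IsLeast.csInf_eq ⟨?_, ?_⟩).symm
  · obtain ⟨s, I, J, hI, hJ, h⟩ := exists_alignCost_eq_levenshtein x y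
    exact ⟨s, Fin.le_of_injective I hI.injective, I, J, hI, hJ,
      by rw [editDist, ← h, alignCost, two_mul]⟩
  · rintro v ⟨s, -, I, J, hI, hJ, rfl⟩
    exact (levenshtein_le_alignCost x y hI hJ).trans_eq (by rw [alignCost, two_mul])

/-- The edit distance between two strings of the same length `n` equals the minimum,
over all alignment lengths `s ≤ n` and all strictly increasing maps
`I J : Fin s → Fin n`, of `2·(n−s)` plus the number of aligned mismatches. -/
theorem editDist_eq_min_over_alignments (k n : ℕ) (hk : 2 ≤ k)
    (x y : Fin n → Fin k) :
    editDist (List.ofFn x) (List.ofFn y) =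
      sInf { v : ℕ | ∃ s : ℕ, s ≤ n ∧ ∃ I J : Fin s → Fin n,
        StrictMono I ∧ StrictMono J ∧
        v = 2 * (n - s) +
          (Finset.univ.filter (fun ℓ : Fin s => x (I ℓ) ≠ y (J ℓ))).card } :=
  editDist_eq_min_over_alignments_general k n x y
end

section
/- For every β ∈ (0,1], the function δ ↦ g_k(β,δ) is strictly concave on the interval [0, β/2]; in particular, for every δ ∈ (0, β/2), its second derivative with respect to δ equals 2·H''(δ) + ((2−β)²/(1−δ)³)·H''((β−2δ)/(1−δ)) and is strictly negative, where H''(t) = −(log₂ e)/(t(1−t)). -/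
/-- The binary entropy function `H(t) = -t·log₂ t - (1-t)·log₂(1-t)`. -/
noncomputable def binEntropy (t : ℝ) : ℝ :=
  -(t * Real.logb 2 t) - (1 - t) * Real.logb 2 (1 - t)

/-- The second derivative of the binary entropy, `H''(t) = −(log₂ e)/(t(1−t))`. -/
noncomputable def binEntropy'' (t : ℝ) : ℝ :=
  -(Real.logb 2 (Real.exp 1)) / (t * (1 - t))

/-- The exponent function `g_k(β,δ)`. -/
noncomputable def gExp (k : ℕ) (β δ : ℝ) : ℝ :=
  (β - 2 * δ) * Real.logb 2 ((k : ℝ) - 1) - (1 - δ) * Real.logb 2 (k : ℝ) +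
    2 * binEntropy δ + (1 - δ) * binEntropy ((β - 2 * δ) / (1 - δ))

/-!
Writing `η(x) = -x ln x`, the identity `c·H(a/c) = (η a + η (c-a) - η c) / ln 2` turns the
perspective term `(1-δ)·H((β-2δ)/(1-δ))` into `η`-terms, so that for `δ ≠ 1`
`g_k(β,δ) = (affine in δ) + (2η(δ) + η(1-δ) + η(β-2δ) + η(1-β+δ)) / ln 2`.
Differentiating twice gives `-(2/δ + 1/(1-δ) + 4/(β-2δ) + 1/(1-β+δ)) / ln 2`, which regroups as
`2H''(δ) + ((2-β)²/(1-δ)³)·H''((β-2δ)/(1-δ))`. For `β ≤ 1` and `0 < δ < β/2` all four denominators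
are positive, so the second derivative is negative on the interior of `[0, β/2]`; together with
continuity of the expanded form on the closed interval this gives strict concavity.
-/

open Real (negMulLog)

lemma binEntropy_eq_negMulLog (t : ℝ) :
    binEntropy t = (negMulLog t + negMulLog (1 - t)) / Real.log 2 := by
  simp only [binEntropy, Real.negMulLog, Real.logb]
  ring

lemma mul_binEntropy_div (a : ℝ) {c : ℝ} (hc : c ≠ 0) :
    c * binEntropy (a / c) = (negMulLog a + negMulLog (c - a) - negMulLog c) / Real.log 2 := by
  have ha := Real.negMulLog_mul (a / c) c
  have hb := Real.negMulLog_mul ((c - a) / c) c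
  rw [div_mul_cancel₀ _ hc] at ha hb
  have hsum : a / c + (c - a) / c = 1 := by field_simp; ring
  rw [binEntropy_eq_negMulLog, one_sub_div hc, mul_div_assoc']
  congr 1
  linear_combination -ha - hb - negMulLog c * hsum

noncomputable def gExpExpanded (k : ℕ) (β δ : ℝ) : ℝ :=
  (β - 2 * δ) * Real.logb 2 ((k : ℝ) - 1) - (1 - δ) * Real.logb 2 (k : ℝ) +
    (2 * negMulLog δ + negMulLog (1 - δ) + negMulLog (β - 2 * δ) + negMulLog (1 - β + δ)) /
      Real.log 2

lemma gExp_eq_gExpExpanded (k : ℕ) (β : ℝ) {δ : ℝ} (hδ : δ ≠ 1) :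
    gExp k β δ = gExpExpanded k β δ := by
  rw [gExp, gExpExpanded, mul_binEntropy_div _ (sub_ne_zero.2 hδ.symm), binEntropy_eq_negMulLog,
    show 1 - δ - (β - 2 * δ) = 1 - β + δ by ring]
  ring

lemma continuous_gExpExpanded (k : ℕ) (β : ℝ) : Continuous (gExpExpanded k β) := by
  unfold gExpExpanded
  fun_prop

noncomputable def gExpDeriv (k : ℕ) (β δ : ℝ) : ℝ :=
  -2 * Real.logb 2 ((k : ℝ) - 1) + Real.logb 2 (k : ℝ) +
    (-2 * Real.log δ + Real.log (1 - δ) + 2 * Real.log (β - 2 * δ) - Real.log (1 - β + δ)) /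
      Real.log 2

section Derivatives

variable (k : ℕ) {β δ : ℝ}

lemma hasDerivAt_gExpExpanded (h₀ : δ ≠ 0) (h₁ : 1 - δ ≠ 0) (h₂ : β - 2 * δ ≠ 0)
    (h₃ : 1 - β + δ ≠ 0) : HasDerivAt (gExpExpanded k β) (gExpDeriv k β δ) δ := by
  have dη {f : ℝ → ℝ} {f' : ℝ} (hf : HasDerivAt f f' δ) (hfδ : f δ ≠ 0) :
      HasDerivAt (fun x => negMulLog (f x)) ((-Real.log (f δ) - 1) * f') δ :=
    (Real.hasDerivAt_negMulLog hfδ).comp δ hf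
  have dA := (hasDerivAt_id δ).const_sub 1
  have dB := ((hasDerivAt_id δ).const_mul 2).const_sub β
  have dC := (hasDerivAt_id δ).const_add (1 - β)
  have := ((dB.mul_const (Real.logb 2 ((k : ℝ) - 1))).sub (dA.mul_const (Real.logb 2 k))).add
    (((((dη (hasDerivAt_id δ) h₀).const_mul 2).add (dη dA h₁)).add (dη dB h₂)).add
      (dη dC h₃) |>.div_const (Real.log 2))
  refine this.congr_deriv ?_
  simp only [gExpDeriv, id]
  ring

lemma hasDerivAt_gExp (h₀ : δ ≠ 0) (h₁ : 1 - δ ≠ 0) (h₂ : β - 2 * δ ≠ 0) (h₃ : 1 - β + δ ≠ 0) :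
    HasDerivAt (gExp k β) (gExpDeriv k β δ) δ := by
  have hne : ∀ᶠ x in nhds δ, x ≠ 1 := eventually_ne_nhds fun h => h₁ (sub_eq_zero.2 h.symm)
  exact (hasDerivAt_gExpExpanded k h₀ h₁ h₂ h₃).congr_of_eventuallyEq
    (hne.mono fun x hx => gExp_eq_gExpExpanded k β hx)

lemma hasDerivAt_gExpDeriv (h₀ : δ ≠ 0) (h₁ : 1 - δ ≠ 0) (h₂ : β - 2 * δ ≠ 0)
    (h₃ : 1 - β + δ ≠ 0) :
    HasDerivAt (gExpDeriv k β)
      (2 * binEntropy'' δ + ((2 - β) ^ 2 / (1 - δ) ^ 3) * binEntropy'' ((β - 2 * δ) / (1 - δ)))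
      δ := by
  have dA := (hasDerivAt_id δ).const_sub 1
  have dB := ((hasDerivAt_id δ).const_mul 2).const_sub β
  have dC := (hasDerivAt_id δ).const_add (1 - β)
  have := ((((((hasDerivAt_id δ).log h₀).const_mul (-2)).add (dA.log h₁)).add
    ((dB.log h₂).const_mul 2)).sub (dC.log h₃)).div_const (Real.log 2) |>.const_add
    (-2 * Real.logb 2 ((k : ℝ) - 1) + Real.logb 2 (k : ℝ))
  refine this.congr_deriv ?_
  have hu : 1 - (β - 2 * δ) / (1 - δ) = (1 - β + δ) / (1 - δ) := by field_simp; ring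
  simp only [binEntropy'', hu, id, Real.logb, Real.log_exp]
  field_simp
  ring

end Derivatives

lemma deriv_deriv_eq_of_hasDerivAt {f f' : ℝ → ℝ} {f'' x : ℝ} {s : Set ℝ} (hs : s ∈ nhds x)
    (hf : ∀ y ∈ s, HasDerivAt f (f' y) y) (hf' : HasDerivAt f' f'' x) :
    deriv (deriv f) x = f'' := by
  have : deriv f =ᶠ[nhds x] f' := Filter.eventually_of_mem hs fun y hy => (hf y hy).deriv
  rw [this.deriv_eq, hf'.deriv]

lemma binEntropy''_neg {t : ℝ} (h₀ : 0 < t) (h₁ : t < 1) : binEntropy'' t < 0 := by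
  have : 0 < Real.logb 2 (Real.exp 1) := Real.logb_pos one_lt_two (Real.one_lt_exp_iff.2 one_pos)
  exact div_neg_of_neg_of_pos (neg_neg_of_pos this) (mul_pos h₀ (sub_pos.2 h₁))

lemma deriv_deriv_gExp (k : ℕ) {β δ : ℝ} (hβ : β ≤ 1) (hδ : δ ∈ Set.Ioo 0 (β / 2)) :
    deriv (deriv (gExp k β)) δ =
      2 * binEntropy'' δ + ((2 - β) ^ 2 / (1 - δ) ^ 3) * binEntropy'' ((β - 2 * δ) / (1 - δ)) := by
  have hne : ∀ y ∈ Set.Ioo 0 (β / 2), y ≠ 0 ∧ 1 - y ≠ 0 ∧ β - 2 * y ≠ 0 ∧ 1 - β + y ≠ 0 :=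
    fun y ⟨h, h'⟩ => ⟨h.ne', by linarith, by linarith, by linarith⟩
  obtain ⟨h₀, h₁, h₂, h₃⟩ := hne δ hδ
  refine deriv_deriv_eq_of_hasDerivAt (isOpen_Ioo.mem_nhds hδ) (fun y hy => ?_)
    (hasDerivAt_gExpDeriv k h₀ h₁ h₂ h₃)
  obtain ⟨h₀, h₁, h₂, h₃⟩ := hne y hy
  exact hasDerivAt_gExp k h₀ h₁ h₂ h₃

lemma two_mul_binEntropy''_add_mul_binEntropy''_neg {β δ : ℝ} (hβ : β ≤ 1)
    (hδ : δ ∈ Set.Ioo 0 (β / 2)) :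
    2 * binEntropy'' δ + ((2 - β) ^ 2 / (1 - δ) ^ 3) * binEntropy'' ((β - 2 * δ) / (1 - δ)) <
      0 := by
  obtain ⟨h₀, hδβ⟩ := hδ
  have h₁ : 0 < 1 - δ := by linarith
  have hu₀ : 0 < (β - 2 * δ) / (1 - δ) := div_pos (by linarith) h₁
  have hu₁ : (β - 2 * δ) / (1 - δ) < 1 := (div_lt_one h₁).2 (by linarith)
  exact add_neg (mul_neg_of_pos_of_neg two_pos (binEntropy''_neg h₀ (by linarith)))
    (mul_neg_of_pos_of_neg (div_pos (pow_pos (by linarith) 2) (pow_pos h₁ 3))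
      (binEntropy''_neg hu₀ hu₁))

theorem gExp_strictConcave_and_second_deriv_general (k : ℕ)
    (β : ℝ) (hβ1 : β ≤ 1) :
    StrictConcaveOn ℝ (Set.Icc 0 (β / 2)) (gExp k β) ∧
    ∀ δ ∈ Set.Ioo (0 : ℝ) (β / 2),
      deriv (deriv (gExp k β)) δ =
        2 * binEntropy'' δ +
          ((2 - β) ^ 2 / (1 - δ) ^ 3) * binEntropy'' ((β - 2 * δ) / (1 - δ)) ∧
      deriv (deriv (gExp k β)) δ < 0 := by
  have hneg : ∀ δ ∈ Set.Ioo (0 : ℝ) (β / 2), deriv (deriv (gExp k β)) δ < 0 := fun δ hδ =>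
    (deriv_deriv_gExp k hβ1 hδ).symm ▸ two_mul_binEntropy''_add_mul_binEntropy''_neg hβ1 hδ
  have hcont : ContinuousOn (gExp k β) (Set.Icc 0 (β / 2)) :=
    (continuous_gExpExpanded k β).continuousOn.congr fun δ hδ =>
      gExp_eq_gExpExpanded k β (by linarith [hδ.2])
  refine ⟨strictConcaveOn_of_deriv2_neg (convex_Icc _ _) hcont ?_,
    fun δ hδ => ⟨deriv_deriv_gExp k hβ1 hδ, hneg δ hδ⟩⟩
  rw [interior_Icc]
  exact hneg

/-- For `β ∈ (0,1]`, `δ ↦ g_k(β,δ)` is strictly concave on `[0,β/2]`, and for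
every `δ ∈ (0,β/2)` its second derivative equals
`2·H''(δ) + ((2−β)²/(1−δ)³)·H''((β−2δ)/(1−δ))`, which is strictly negative. -/
theorem gExp_strictConcave_and_second_deriv (k : ℕ) (hk : 2 ≤ k)
    (β : ℝ) (hβ0 : 0 < β) (hβ1 : β ≤ 1) :
    StrictConcaveOn ℝ (Set.Icc 0 (β / 2)) (gExp k β) ∧
    ∀ δ ∈ Set.Ioo (0 : ℝ) (β / 2),
      deriv (deriv (gExp k β)) δ =
        2 * binEntropy'' δ +
          ((2 - β) ^ 2 / (1 - δ) ^ 3) * binEntropy'' ((β - 2 * δ) / (1 - δ)) ∧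
      deriv (deriv (gExp k β)) δ < 0 :=
  gExp_strictConcave_and_second_deriv_general k β hβ1
end

section
/- Let β ∈ (0,1] and let 0 < δˡ < δʳ < β/2 be such that g'(δˡ) > 0 and g'(δʳ) < 0, where g' denotes the derivative of δ ↦ g_k(β,δ). Define y(δˡ,δʳ) = ( g'(δˡ)·g'(δʳ)·(δˡ−δʳ) + g'(δˡ)·g_k(β,δʳ) − g'(δʳ)·g_k(β,δˡ) ) / ( g'(δˡ) − g'(δʳ) ). Then max( g_k(β,δˡ), g_k(β,δʳ) ) ≤ G_k(β) ≤ y(δˡ,δʳ). -/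
/-- `G_k(β) = sup { g_k(β,δ) : 0 ≤ δ ≤ β/2 }`. -/
noncomputable def GExp (k : ℕ) (β : ℝ) : ℝ :=
  sSup (gExp k β '' Set.Icc 0 (β / 2))

open Set

/-- Rewrite `binEntropy` via `negMulLog`. -/
lemma binEntropy_eq' (t : ℝ) :
    binEntropy t = (Real.negMulLog t + Real.negMulLog (1 - t)) / Real.log 2 := by
  unfold binEntropy Real.negMulLog Real.logb
  ring

/-- Perspective identity for `negMulLog`. -/
lemma nml_key {a b c : ℝ} (hc : c ≠ 0) (h : a + b = c) :
    c * (Real.negMulLog (a / c) + Real.negMulLog (b / c))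
      = Real.negMulLog a + Real.negMulLog b - Real.negMulLog c := by
  have e1 : Real.negMulLog a = c * Real.negMulLog (a / c) + (a / c) * Real.negMulLog c := by
    conv_lhs => rw [show a = a / c * c by field_simp]
    rw [Real.negMulLog_mul]
  have e2 : Real.negMulLog b = c * Real.negMulLog (b / c) + (b / c) * Real.negMulLog c := by
    conv_lhs => rw [show b = b / c * c by field_simp]
    rw [Real.negMulLog_mul]
  field_simp at e1 e2
  apply mul_left_cancel₀ hc
  linear_combination -e1 - e2 - Real.negMulLog c * h

/-- The natural-log version of `gExp`. -/
noncomputable def phiExp (k : ℕ) (β δ : ℝ) : ℝ :=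
  (β - 2 * δ) * Real.log ((k : ℝ) - 1) - (1 - δ) * Real.log k
    + 2 * Real.negMulLog δ + Real.negMulLog (1 - δ)
    + Real.negMulLog (β - 2 * δ) + Real.negMulLog (1 - β + δ)

lemma gExp_eq_phi (k : ℕ) {β δ : ℝ} (hβ1 : β ≤ 1) (h2 : δ ≤ β / 2) :
    gExp k β δ = phiExp k β δ / Real.log 2 := by
  have hδ1 : 1 - δ ≠ 0 := by nlinarith
  have h1u : 1 - (β - 2 * δ) / (1 - δ) = (1 - β + δ) / (1 - δ) := by
    field_simp; ring
  have hkey := nml_key (a := β - 2 * δ) (b := 1 - β + δ) hδ1 (by ring)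
  have hL : Real.log 2 ≠ 0 := by
    have := Real.log_pos (by norm_num : (1:ℝ) < 2); linarith
  rw [gExp, binEntropy_eq', binEntropy_eq', h1u, phiExp, Real.logb, Real.logb]
  field_simp
  linear_combination hkey

lemma concaveOn_affine' {S : Set ℝ} (hS : Convex ℝ S) (p q : ℝ) :
    ConcaveOn ℝ S (fun x => p + q * x) := by
  refine ⟨hS, fun x _ y _ a b ha hb hab => ?_⟩
  simp only [smul_eq_mul]
  exact le_of_eq (by linear_combination p * hab)

lemma concaveOn_nml_affine {S : Set ℝ} (hS : Convex ℝ S) (p q : ℝ)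
    (h : ∀ x ∈ S, 0 ≤ p + q * x) :
    ConcaveOn ℝ S (fun x => Real.negMulLog (p + q * x)) := by
  refine ⟨hS, fun x hx y hy a b ha hb hab => ?_⟩
  have h1 := Real.concaveOn_negMulLog.2 (Set.mem_Ici.2 (h x hx)) (Set.mem_Ici.2 (h y hy))
    ha hb hab
  have e : a • (p + q * x) + b • (p + q * y) = p + q * (a • x + b • y) := by
    simp only [smul_eq_mul]; linear_combination p * hab
  rwa [e] at h1

/-- Tangent line bound for concave functions. -/
lemma ConcaveOn.le_tangent {S : Set ℝ} {f : ℝ → ℝ} (hf : ConcaveOn ℝ S f) {a x : ℝ}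
    (ha : a ∈ S) (hx : x ∈ S) (hd : DifferentiableAt ℝ f a) :
    f x ≤ f a + deriv f a * (x - a) := by
  rcases lt_trichotomy x a with h | rfl | h
  · have hs := hf.deriv_le_slope hx ha h hd
    rw [slope_def_field] at hs
    have hax : 0 < a - x := by linarith
    rw [le_div_iff₀ hax] at hs
    nlinarith
  · simp
  · have hs := hf.slope_le_deriv ha hx h hd
    rw [slope_def_field] at hs
    have hax : 0 < x - a := by linarith
    rw [div_le_iff₀ hax] at hs
    nlinarith

/-- The intersection ordinate of two tangent lines bounds their min. -/
lemma min_tangent_le (da db ga gb a b x : ℝ) (hda : 0 < da) (hdb : db < 0) :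
    min (ga + da * (x - a)) (gb + db * (x - b)) ≤
      (da * db * (a - b) + da * gb - db * ga) / (da - db) := by
  by_contra hcon
  push_neg at hcon
  have hd : 0 < da - db := by linarith
  have h1 : (da * db * (a - b) + da * gb - db * ga) / (da - db) < ga + da * (x - a) :=
    lt_of_lt_of_le hcon (min_le_left _ _)
  have h2 : (da * db * (a - b) + da * gb - db * ga) / (da - db) < gb + db * (x - b) :=
    lt_of_lt_of_le hcon (min_le_right _ _)
  rw [div_lt_iff₀ hd] at h1 h2
  have hE1 : 0 < da * (ga - gb + da * (x - a) - db * (x - b)) := by nlinarith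
  have hE2 : 0 < db * (ga - gb + da * (x - a) - db * (x - b)) := by nlinarith
  nlinarith [mul_pos (by linarith : (0:ℝ) < -db) hE1, mul_pos hda hE2]

lemma concaveOn_psi (k : ℕ) {β : ℝ} (hβ1 : β ≤ 1) :
    ConcaveOn ℝ (Icc 0 (β / 2)) (fun δ => phiExp k β δ / Real.log 2) := by
  set S : Set ℝ := Icc 0 (β / 2) with hS
  have hSc : Convex ℝ S := convex_Icc _ _
  have mem1 : ∀ x ∈ S, (0:ℝ) ≤ 0 + 1 * x := by rintro x ⟨h1, h2⟩; simpa using h1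
  have mem2 : ∀ x ∈ S, (0:ℝ) ≤ 1 + (-1) * x := by rintro x ⟨h1, h2⟩; nlinarith
  have mem3 : ∀ x ∈ S, (0:ℝ) ≤ β + (-2) * x := by rintro x ⟨h1, h2⟩; nlinarith
  have mem4 : ∀ x ∈ S, (0:ℝ) ≤ (1 - β) + 1 * x := by rintro x ⟨h1, h2⟩; nlinarith
  have c0 := concaveOn_affine' hSc (β * Real.log ((k:ℝ) - 1) - Real.log k)
    (Real.log k - 2 * Real.log ((k:ℝ) - 1))
  have c1 := concaveOn_nml_affine hSc 0 1 mem1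
  have c2 := concaveOn_nml_affine hSc 1 (-1) mem2
  have c3 := concaveOn_nml_affine hSc β (-2) mem3
  have c4 := concaveOn_nml_affine hSc (1 - β) 1 mem4
  have c1' := c1.smul (by norm_num : (0:ℝ) ≤ 2)
  have hsum := ((((c0.add c1').add c2).add c3).add c4).smul
    (le_of_lt (inv_pos.2 (Real.log_pos (by norm_num : (1:ℝ) < 2))))
  have hfun : (fun δ => phiExp k β δ / Real.log 2) =
      (Real.log 2)⁻¹ • ((fun x => (β * Real.log ((k:ℝ) - 1) - Real.log k) +
          (Real.log k - 2 * Real.log ((k:ℝ) - 1)) * x) +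
        (2:ℝ) • (fun x => Real.negMulLog (0 + 1 * x)) +
        (fun x => Real.negMulLog (1 + (-1) * x)) +
        (fun x => Real.negMulLog (β + (-2) * x)) +
        (fun x => Real.negMulLog ((1 - β) + 1 * x))) := by
    funext x
    simp only [Pi.smul_apply, Pi.add_apply, smul_eq_mul, phiExp]
    ring_nf
  rw [hfun]
  exact hsum

lemma diff_psi (k : ℕ) {β a : ℝ} (hβ1 : β ≤ 1) (h0 : 0 < a) (h2 : a < β / 2) :
    DifferentiableAt ℝ (fun δ => phiExp k β δ / Real.log 2) a := by
  have d1 : DifferentiableAt ℝ (fun δ : ℝ => Real.negMulLog δ) a :=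
    Real.differentiableAt_negMulLog h0.ne'
  have d2 : DifferentiableAt ℝ (fun δ : ℝ => Real.negMulLog (1 - δ)) a := by
    have := (Real.differentiableAt_negMulLog (x := 1 - a) (by nlinarith)).comp a
      ((differentiableAt_const (1:ℝ)).sub differentiableAt_id)
    exact this
  have d3 : DifferentiableAt ℝ (fun δ : ℝ => Real.negMulLog (β - 2 * δ)) a := by
    have := (Real.differentiableAt_negMulLog (x := β - 2 * a) (by nlinarith)).comp a
      ((differentiableAt_const β).sub ((differentiableAt_const (2:ℝ)).mul differentiableAt_id))
    exact this
  have d4 : DifferentiableAt ℝ (fun δ : ℝ => Real.negMulLog (1 - β + δ)) a := by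
    have := (Real.differentiableAt_negMulLog (x := 1 - β + a) (by nlinarith)).comp a
      ((differentiableAt_const (1 - β)).add differentiableAt_id)
    exact this
  apply DifferentiableAt.div_const
  unfold phiExp
  apply DifferentiableAt.add
  apply DifferentiableAt.add
  apply DifferentiableAt.add
  apply DifferentiableAt.add
  apply DifferentiableAt.sub
  · exact (by fun_prop : DifferentiableAt ℝ (fun δ : ℝ => (β - 2 * δ) * Real.log ((k:ℝ)-1)) a)
  · exact (by fun_prop : DifferentiableAt ℝ (fun δ : ℝ => (1 - δ) * Real.log k) a)
  · exact d1.const_mul 2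
  · exact d2
  · exact d3
  · exact d4

/-- Tangent-line bracketing of `G_k(β)`: if `0 < δˡ < δʳ < β/2` with
`g'(δˡ) > 0` and `g'(δʳ) < 0`, then `G_k(β)` lies between
`max(g(δˡ), g(δʳ))` and the ordinate of the intersection of the tangents. -/
theorem GExp_tangent_bracket (k : ℕ) (hk : 2 ≤ k)
    (β : ℝ) (hβ0 : 0 < β) (hβ1 : β ≤ 1)
    (δl δr : ℝ) (h0l : 0 < δl) (hlr : δl < δr) (hrβ : δr < β / 2)
    (hl : 0 < deriv (gExp k β) δl) (hr : deriv (gExp k β) δr < 0) :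
    max (gExp k β δl) (gExp k β δr) ≤ GExp k β ∧
    GExp k β ≤
      (deriv (gExp k β) δl * deriv (gExp k β) δr * (δl - δr) +
        deriv (gExp k β) δl * gExp k β δr -
        deriv (gExp k β) δr * gExp k β δl) /
      (deriv (gExp k β) δl - deriv (gExp k β) δr) := by
  have h0r : 0 < δr := lt_trans h0l hlr
  have hlβ : δl < β / 2 := lt_trans hlr hrβ
  have hδlS : δl ∈ Icc 0 (β / 2) := ⟨h0l.le, hlβ.le⟩
  have hδrS : δr ∈ Icc 0 (β / 2) := ⟨h0r.le, hrβ.le⟩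
  set ψ : ℝ → ℝ := fun δ => phiExp k β δ / Real.log 2 with hψ
  have hconc : ConcaveOn ℝ (Icc 0 (β / 2)) ψ := concaveOn_psi k hβ1
  have hEqOn : ∀ x ∈ Icc 0 (β / 2), gExp k β x = ψ x := fun x hx => gExp_eq_phi k hβ1 hx.2
  have hderiv : ∀ a : ℝ, 0 < a → a < β / 2 → deriv (gExp k β) a = deriv ψ a := by
    intro a ha0 haβ
    apply Filter.EventuallyEq.deriv_eq
    filter_upwards [Ioo_mem_nhds ha0 haβ] with x hx
    exact gExp_eq_phi k hβ1 hx.2.le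
  have hdl := diff_psi k hβ1 h0l hlβ
  have hdr := diff_psi k hβ1 h0r hrβ
  have htl : ∀ x ∈ Icc 0 (β / 2),
      gExp k β x ≤ gExp k β δl + deriv (gExp k β) δl * (x - δl) := by
    intro x hx
    rw [hEqOn x hx, hEqOn δl hδlS, hderiv δl h0l hlβ]
    exact hconc.le_tangent hδlS hx hdl
  have htr : ∀ x ∈ Icc 0 (β / 2),
      gExp k β x ≤ gExp k β δr + deriv (gExp k β) δr * (x - δr) := by
    intro x hx
    rw [hEqOn x hx, hEqOn δr hδrS, hderiv δr h0r hrβ]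
    exact hconc.le_tangent hδrS hx hdr
  have hy : ∀ x ∈ Icc 0 (β / 2), gExp k β x ≤
      (deriv (gExp k β) δl * deriv (gExp k β) δr * (δl - δr) +
        deriv (gExp k β) δl * gExp k β δr -
        deriv (gExp k β) δr * gExp k β δl) /
      (deriv (gExp k β) δl - deriv (gExp k β) δr) := by
    intro x hx
    exact le_trans (le_min (htl x hx) (htr x hx))
      (min_tangent_le _ _ (gExp k β δl) (gExp k β δr) δl δr x hl hr)
  have hbdd : BddAbove (gExp k β '' Icc 0 (β / 2)) := by
    refine ⟨(deriv (gExp k β) δl * deriv (gExp k β) δr * (δl - δr) +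
        deriv (gExp k β) δl * gExp k β δr -
        deriv (gExp k β) δr * gExp k β δl) /
      (deriv (gExp k β) δl - deriv (gExp k β) δr), ?_⟩
    rintro _ ⟨x, hx, rfl⟩
    exact hy x hx
  constructor
  · exact max_le (le_csSup hbdd ⟨δl, hδlS, rfl⟩) (le_csSup hbdd ⟨δr, hδrS, rfl⟩)
  · refine csSup_le ⟨_, ⟨δl, hδlS, rfl⟩⟩ ?_
    rintro _ ⟨x, hx, rfl⟩
    exact hy x hx
end

section
/- For every integer k ≥ 2, g_k(1, 1/k) > 0; that is, (1 − 2/k)·log₂(k−1) − (1 − 1/k)·log₂ k + 2H(1/k) + (1 − 1/k)·H((1 − 2/k)/(1 − 1/k)) > 0. -/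
/-- For every `k ≥ 2`, `g_k(1, 1/k) > 0`. -/
theorem gExp_one_inv_k_pos (k : ℕ) (hk : 2 ≤ k) :
    0 < gExp k 1 (1 / (k : ℝ)) := by
  rcases eq_or_lt_of_le hk with h2 | h3
  · -- k = 2
    subst h2
    have h : Real.logb 2 ((1:ℝ)/2) = -1 := by
      rw [one_div, Real.logb_inv, Real.logb_self_eq_one (by norm_num)]
    norm_num [gExp, binEntropy]
    rw [h]
    norm_num
  · -- k ≥ 3
    have hk3 : (3:ℝ) ≤ (k:ℝ) := by exact_mod_cast h3
    set K : ℝ := (k:ℝ) with hKdef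
    have hK0 : K ≠ 0 := by linarith
    have hK1 : K - 1 ≠ 0 := by linarith
    have hK1p : (0:ℝ) < K - 1 := by linarith
    have hK2p : (0:ℝ) < K - 2 := by linarith
    set a : ℝ := Real.logb 2 K with ha
    set b : ℝ := Real.logb 2 (K - 1) with hb
    set c : ℝ := Real.logb 2 (K - 2) with hc
    have l1 : Real.logb 2 (1/K) = -a := by rw [one_div, Real.logb_inv]
    have e2 : 1 - 1/K = (K-1)/K := by field_simp
    have l2 : Real.logb 2 (1 - 1/K) = b - a := by
      rw [e2, Real.logb_div hK1 hK0]
    have l3 : (1 - 2*(1/K))/(1 - 1/K) = (K-2)/(K-1) := by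
      rw [e2]
      field_simp
    have l4 : Real.logb 2 ((K-2)/(K-1)) = c - b := by
      rw [Real.logb_div (by linarith) hK1]
    have l5 : 1 - (K-2)/(K-1) = 1/(K-1) := by
      field_simp
      ring
    have l6 : Real.logb 2 (1/(K-1)) = -b := by rw [one_div, Real.logb_inv]
    have expand : gExp k 1 (1/K) = ((K+1)*a - b - (K-2)*c)/K := by
      simp only [gExp, binEntropy, ← hKdef]
      rw [l3, l1, l2, l4, l5, l6]
      field_simp
      ring
    rw [expand]
    apply div_pos _ (by linarith)
    have hap : 0 < a := Real.logb_pos (by norm_num) (by linarith)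
    have hba : b < a := by
      apply Real.logb_lt_logb (by norm_num) hK1p (by linarith)
    have hcp : 0 ≤ c := Real.logb_nonneg (by norm_num) (by linarith)
    have hca : c ≤ a := by
      exact Real.logb_le_logb_of_le (by norm_num) (by linarith) (by linarith)
    nlinarith [mul_le_mul_of_nonneg_left hca (le_of_lt hK2p)]
end
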